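/- arXiv:0905.2373 — 5 statements merged into one kernel-verified Lean document; each statement's English description precedes it below -/
import Mathlib

section
/- Let G be an LCA group and H a uniform lattice in G. Then there exists a Borel measurable set C ⊆ G which is a section of G/H, i.e., C contains exactly one representative of each coset of H; moreover, C can be chosen relatively compact. -/
/-!
Choose an open neighbourhood `V` of `1` with compact closure on which `G → G ⧸ H` is injective
(possible since `H` is discrete). Finitely many translates `gᵢ V` cover `G ⧸ H` by compactness;
keeping from `gᵢ V` only the points whose coset is not already hit by `g₀ V, …, gᵢ₋₁ V` gives a
Borel section contained in the compact set `⋃ gᵢ · closure V`.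
-/

open Set Topology Pointwise

section DisjointedSection

variable {α β : Type*}

def disjointedSection {ι : Type*} [Preorder ι] [LocallyFiniteOrderBot ι]
    (f : α → β) (s : ι → Set α) : Set α :=
  ⋃ i, s i ∩ f ⁻¹' disjointed (fun i ↦ f '' s i) i

lemma disjointedSection_subset_iUnion {ι : Type*} [Preorder ι] [LocallyFiniteOrderBot ι]
    (f : α → β) (s : ι → Set α) : disjointedSection f s ⊆ ⋃ i, s i :=
  iUnion_mono fun _ ↦ inter_subset_left

lemma bijOn_disjointedSection {ι : Type*} [LinearOrder ι] [LocallyFiniteOrderBot ι]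
    {f : α → β} {s : ι → Set α} (hinj : ∀ i, InjOn f (s i)) (hcover : ⋃ i, f '' s i = univ) :
    BijOn f (disjointedSection f s) univ := by
  refine ⟨mapsTo_univ _ _, ?_, fun b _ ↦ ?_⟩
  · rintro a ha a' ha' hfa
    obtain ⟨i, hai, hai'⟩ := mem_iUnion.1 ha
    obtain ⟨j, haj, haj'⟩ := mem_iUnion.1 ha'
    obtain rfl : i = j := by
      by_contra hij
      exact (disjoint_disjointed (fun i ↦ f '' s i) hij).ne_of_mem hai' haj' hfa
    exact hinj i hai haj hfa
  · have hb : b ∈ ⋃ i, disjointed (fun i ↦ f '' s i) i := by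
      rw [iUnion_disjointed, hcover]; trivial
    obtain ⟨i, hbi⟩ := mem_iUnion.1 hb
    obtain ⟨a, ha, rfl⟩ := disjointed_subset _ i hbi
    exact ⟨a, mem_iUnion.2 ⟨i, ha, hbi⟩, rfl⟩

end DisjointedSection

lemma Set.BijOn.existsUnique {α β : Type*} {f : α → β} {s : Set α} (h : BijOn f s univ)
    (b : β) : ∃! a, a ∈ s ∧ f a = b := by
  obtain ⟨a, ha, rfl⟩ := h.surjOn (mem_univ b)
  exact ⟨a, ⟨ha, rfl⟩, fun a' ha' ↦ h.injOn ha'.1 ha ha'.2⟩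

lemma MeasurableSet.disjointed_of_countable {α ι : Type*} [MeasurableSpace α] [Preorder ι]
    [LocallyFiniteOrderBot ι] [Countable ι] {s : ι → Set α} (hs : ∀ i, MeasurableSet (s i))
    (i : ι) : MeasurableSet (disjointed s i) := by
  rw [disjointed_eq_inter_compl]
  exact (hs i).inter (.iInter fun j ↦ .iInter fun _ ↦ (hs j).compl)

namespace QuotientGroup

variable {G : Type*} [Group G] (H : Subgroup G)

lemma injOn_mk_smul {V : Set G} (hV : InjOn ((↑) : G → G ⧸ H) V) (g : G) :
    InjOn ((↑) : G → G ⧸ H) (g • V) := by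
  rintro _ ⟨a, ha, rfl⟩ _ ⟨b, hb, rfl⟩ hab
  rw [hV ha hb (QuotientGroup.eq.2 (by simpa [mul_assoc] using QuotientGroup.eq.1 hab))]

variable [TopologicalSpace G] [IsTopologicalGroup G]

lemma exists_mem_nhds_one_injOn_mk [DiscreteTopology H] :
    ∃ V ∈ 𝓝 (1 : G), InjOn ((↑) : G → G ⧸ H) V := by
  obtain ⟨U, hUo, hU⟩ := discreteTopology_subtype_iff'.1 ‹DiscreteTopology H› 1 H.one_mem
  obtain ⟨V, hV, hVU⟩ := exists_nhds_split_inv (hUo.mem_nhds (hU.ge rfl).1)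
  refine ⟨V⁻¹, inv_mem_nhds_one G hV, fun a ha b hb hab ↦ ?_⟩
  have hmem : a⁻¹ * b ∈ U ∩ H := ⟨by simpa using hVU _ ha _ hb, QuotientGroup.eq.1 hab⟩
  rw [hU] at hmem
  exact inv_mul_eq_one.1 hmem

lemma exists_isOpen_injOn_mk_isCompact_closure [WeaklyLocallyCompactSpace G]
    [DiscreteTopology H] :
    ∃ V : Set G, IsOpen V ∧ (1 : G) ∈ V ∧ InjOn ((↑) : G → G ⧸ H) V ∧ IsCompact (closure V) := by
  obtain ⟨U, hU, hUinj⟩ := exists_mem_nhds_one_injOn_mk H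
  obtain ⟨K, hKc, hK⟩ := exists_compact_mem_nhds (1 : G)
  refine ⟨interior (U ∩ K), isOpen_interior,
    mem_interior_iff_mem_nhds.2 (Filter.inter_mem hU hK),
    hUinj.mono (interior_subset.trans inter_subset_left),
    hKc.closure_of_subset (interior_subset.trans inter_subset_right)⟩

lemma exists_fin_iUnion_image_smul_eq_univ [CompactSpace (G ⧸ H)] {V : Set G} (hV : IsOpen V)
    (h1 : (1 : G) ∈ V) :
    ∃ (n : ℕ) (g : Fin n → G), ⋃ i, ((↑) : G → G ⧸ H) '' (g i • V) = univ := by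
  obtain ⟨t, ht⟩ := isCompact_univ.elim_finite_subcover
    (fun g : G ↦ ((↑) : G → G ⧸ H) '' (g • V)) (fun g ↦ isOpenMap_coe _ (hV.smul g))
    fun q _ ↦ by
      obtain ⟨x, rfl⟩ := mk_surjective q
      exact mem_iUnion.2 ⟨x, x, by simpa using smul_mem_smul_set (a := x) h1, rfl⟩
  refine ⟨t.toList.length, t.toList.get, eq_univ_of_univ_subset fun q hq ↦ ?_⟩
  obtain ⟨a, ha, hqa⟩ := mem_iUnion₂.1 (ht hq)
  obtain ⟨i, rfl⟩ := List.mem_iff_get.1 (Finset.mem_toList.2 ha)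
  exact mem_iUnion.2 ⟨i, hqa⟩

lemma measurableSet_image_mk [MeasurableSpace G] [OpensMeasurableSpace G] {U : Set G}
    (hU : IsOpen U) : MeasurableSet (((↑) : G → G ⧸ H) '' U) :=
  measurableSet_quotient.2 ((isOpenMap_coe U hU).preimage continuous_coinduced_rng).measurableSet

lemma measurableSet_disjointedSection_mk [MeasurableSpace G] [OpensMeasurableSpace G]
    {ι : Type*} [Preorder ι] [LocallyFiniteOrderBot ι] [Countable ι] {s : ι → Set G}
    (hs : ∀ i, IsOpen (s i)) : MeasurableSet (disjointedSection ((↑) : G → G ⧸ H) s) :=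
  .iUnion fun i ↦ (hs i).measurableSet.inter <| measurable_quotient_mk'' <|
    .disjointed_of_countable (fun j ↦ measurableSet_image_mk H (hs j)) i

end QuotientGroup

open QuotientGroup in
theorem exists_borel_section_of_uniform_lattice_general
    (G : Type*) [CommGroup G] [TopologicalSpace G] [IsTopologicalGroup G]
    [LocallyCompactSpace G]
    [MeasurableSpace G] [BorelSpace G]
    (H : Subgroup G) (hHdisc : DiscreteTopology ↥H) (hHcocompact : CompactSpace (G ⧸ H)) :
    ∃ C : Set G, MeasurableSet C ∧
      (∀ x : G, ∃! c : G, c ∈ C ∧ c⁻¹ * x ∈ H) ∧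
      IsCompact (closure C) := by
  obtain ⟨V, hVo, hV1, hVinj, hVc⟩ := exists_isOpen_injOn_mk_isCompact_closure H
  obtain ⟨n, g, hg⟩ := exists_fin_iUnion_image_smul_eq_univ H hVo hV1
  have hbij := bijOn_disjointedSection (fun i ↦ injOn_mk_smul H hVinj (g i)) hg
  refine ⟨disjointedSection _ fun i ↦ g i • V,
    measurableSet_disjointedSection_mk H fun i ↦ hVo.smul (g i), fun x ↦ ?_, ?_⟩
  · simpa only [QuotientGroup.eq] using hbij.existsUnique (x : G ⧸ H)
  · exact (isCompact_iUnion fun i ↦ hVc.smul (g i)).closure_of_subset <|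
      (disjointedSection_subset_iUnion _ _).trans <|
        iUnion_mono fun i ↦ smul_set_mono subset_closure

/-- If `G` is an LCA group and `H` a uniform lattice in `G` (a discrete subgroup with compact
quotient), then there exists a Borel measurable section `C` of `G ⧸ H`, i.e. a Borel set
containing exactly one representative of each coset of `H`; moreover `C` can be chosen
relatively compact. -/
theorem exists_borel_section_of_uniform_lattice
    (G : Type*) [CommGroup G] [TopologicalSpace G] [IsTopologicalGroup G]
    [LocallyCompactSpace G] [T2Space G]
    [MeasurableSpace G] [BorelSpace G]
    (H : Subgroup G) (hHdisc : DiscreteTopology ↥H) (hHcocompact : CompactSpace (G ⧸ H)) :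
    ∃ C : Set G, MeasurableSet C ∧
      (∀ x : G, ∃! c : G, c ∈ C ∧ c⁻¹ * x ∈ H) ∧
      IsCompact (closure C) :=
  exists_borel_section_of_uniform_lattice_general G H hHdisc hHcocompact
end

section
/- Let G be a second countable LCA group, H a countable uniform lattice, Δ its annihilator, Ω a Borel section of Ĝ/Δ. If φ ∈ L¹(Ω) satisfies ∫_Ω γ(h)⁻¹ φ(γ) dm_Ĝ(γ) = 0 for all h ∈ H, then φ = 0 almost everywhere on Ω. -/
/-- The annihilator of a subgroup `H` of `G` inside the Pontryagin dual of `G`: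
the set of continuous characters of `G` that are trivial on `H`. -/
def annihilator {G : Type*} [CommGroup G] [TopologicalSpace G] [IsTopologicalGroup G]
    (H : Subgroup G) : Subgroup (PontryaginDual G) where
  carrier := {γ | ∀ h ∈ H, γ h = 1}
  one_mem' := by intro h hh; rfl
  mul_mem' := by
    intro γ γ' hγ hγ' h hh
    show γ h * γ' h = 1
    rw [hγ h hh, hγ' h hh, one_mul]
  inv_mem' := by
    intro γ hγ h hh
    show (γ h)⁻¹ = 1
    rw [hγ h hh, inv_one]


open MeasureTheory

/-!
Restricting characters of `Ĝ` to `H` gives a continuous map `Φ : Ĝ → (H → 𝕋)` into a compact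
torus, injective on `Ω` because `Ω` meets every coset of `Δ` exactly once. Every character of
the torus is a monomial in the coordinates and pulls back along `Φ` to `γ ↦ γ(h)` for some
`h ∈ H`, so the hypothesis says that the pushforward of `φ · μ|_Ω` annihilates the characters of
the torus; by Stone–Weierstrass it annihilates all continuous functions and hence all Borel
sets. By Lusin–Souslin, `Φ` maps Borel subsets of `Ω` to Borel sets, so every set integral of
`φ` over `Ω` vanishes.
-/

open Set Function
open scoped BoundedContinuousFunction

theorem ContinuousMap.dense_span_closure_union_star {𝕜 X : Type*} [RCLike 𝕜]
    [TopologicalSpace X] [CompactSpace X] {s : Set C(X, 𝕜)}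
    (hs : ∀ x y, x ≠ y → ∃ f ∈ s, f x ≠ f y) :
    Dense (Submodule.span 𝕜 (Submonoid.closure (s ∪ star s) : Set C(X, 𝕜)) : Set C(X, 𝕜)) := by
  have hsep : (StarAlgebra.adjoin 𝕜 s).SeparatesPoints := fun x y hxy => by
    obtain ⟨f, hf, hfxy⟩ := hs x y hxy
    exact ⟨f, ⟨f, StarAlgebra.subset_adjoin 𝕜 s hf, rfl⟩, hfxy⟩
  rw [← StarAlgebra.adjoin_eq_span, dense_iff_closure_eq]
  have := ContinuousMap.starSubalgebra_topologicalClosure_eq_top_of_separatesPoints _ hsep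
  exact congr_arg ((↑) : StarSubalgebra 𝕜 C(X, 𝕜) → Set C(X, 𝕜)) this

def circleCoord (M : Type*) (m : M) : C(M → Circle, ℂ) :=
  ⟨fun x => (x m : ℂ), by fun_prop⟩

theorem circleCoord_separatesPoints (M : Type*) {x y : M → Circle} (hxy : x ≠ y) :
    ∃ f ∈ range (circleCoord M), f x ≠ f y := by
  obtain ⟨m, hm⟩ := Function.ne_iff.mp hxy
  exact ⟨circleCoord M m, mem_range_self m, by simpa [circleCoord, Circle.coe_inj] using hm⟩

theorem exists_apply_eq_of_mem_closure_circleCoord {M : Type*} [Group M] {f : C(M → Circle, ℂ)}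
    (hf : f ∈ Submonoid.closure (range (circleCoord M) ∪ star (range (circleCoord M)))) :
    ∃ m : M, ∀ χ : M →* Circle, f χ = χ m := by
  induction hf using Submonoid.closure_induction with
  | mem f hf =>
    rcases hf with ⟨m, rfl⟩ | ⟨m, hm⟩
    · exact ⟨m, fun χ => rfl⟩
    · refine ⟨m⁻¹, fun χ => ?_⟩
      rw [← star_star f, ← hm, map_inv, Circle.coe_inv_eq_conj]
      rfl
  | one => exact ⟨1, fun χ => by simp⟩
  | mul f g _ _ hf hg =>
    obtain ⟨m, hm⟩ := hf
    obtain ⟨n, hn⟩ := hg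
    exact ⟨m * n, fun χ => by simp [hm, hn]⟩

section IntegralCompMul

variable {X T : Type*} [MeasurableSpace X] [MeasurableSpace T]
  {ν : Measure X} {Φ : X → T} {φ : X → ℂ}

theorem integrable_comp_mul (hΦ : Measurable Φ) (hφ : Integrable φ ν)
    {u : T → ℂ} (hu : Measurable u) {C : ℝ} (hC : ∀ y, ‖u y‖ ≤ C) :
    Integrable (fun x => u (Φ x) * φ x) ν :=
  hφ.bdd_mul (hu.comp hΦ).aestronglyMeasurable (.of_forall fun x => hC (Φ x))

noncomputable def integralCompMulCLM [TopologicalSpace T] [OpensMeasurableSpace T]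
    [CompactSpace T] (hΦ : Measurable Φ) (hφ : Integrable φ ν) : C(T, ℂ) →L[ℂ] ℂ :=
  LinearMap.mkContinuous
    { toFun := fun f => ∫ x, f (Φ x) * φ x ∂ν
      map_add' := fun f g => by
        simp only [ContinuousMap.add_apply, add_mul]
        exact integral_add
          (integrable_comp_mul hΦ hφ f.continuous.measurable f.norm_coe_le_norm)
          (integrable_comp_mul hΦ hφ g.continuous.measurable g.norm_coe_le_norm)
      map_smul' := fun c f => by
        simp only [ContinuousMap.smul_apply, smul_eq_mul, mul_assoc, RingHom.id_apply]
        exact integral_const_mul c _ }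
    (∫ x, ‖φ x‖ ∂ν) fun f => by
      calc ‖∫ x, f (Φ x) * φ x ∂ν‖ ≤ ∫ x, ‖f‖ * ‖φ x‖ ∂ν := by
            refine norm_integral_le_of_norm_le (hφ.norm.const_mul _) (.of_forall fun x => ?_)
            rw [norm_mul]
            exact mul_le_mul_of_nonneg_right (f.norm_coe_le_norm _) (norm_nonneg _)
        _ = (∫ x, ‖φ x‖ ∂ν) * ‖f‖ := by rw [integral_const_mul, mul_comm]

theorem integral_comp_mul_eq_zero_of_dense [TopologicalSpace T] [OpensMeasurableSpace T]
    [CompactSpace T] (hΦ : Measurable Φ) (hφ : Integrable φ ν) {s : Set C(T, ℂ)}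
    (hs : Dense (Submodule.span ℂ s : Set C(T, ℂ)))
    (h : ∀ f ∈ s, ∫ x, f (Φ x) * φ x ∂ν = 0) (f : C(T, ℂ)) :
    ∫ x, f (Φ x) * φ x ∂ν = 0 := by
  have : integralCompMulCLM hΦ hφ = 0 := ContinuousLinearMap.ext_on hs h
  exact congr($this f)

theorem enorm_integral_comp_mul_le (hΦ : Measurable Φ) (hφ : Integrable φ ν) {u : T → ℂ}
    (hu : Measurable u) :
    ‖∫ x, u (Φ x) * φ x ∂ν‖ₑ ≤ ∫⁻ y, ‖u y‖ₑ ∂(ν.withDensity (fun x => ‖φ x‖ₑ)).map Φ := by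
  rw [lintegral_map hu.enorm hΦ,
    lintegral_withDensity_eq_lintegral_mul₀ (g := fun x => ‖u (Φ x)‖ₑ) hφ.1.enorm
    (hu.comp hΦ).enorm.aemeasurable]
  refine (enorm_integral_le_lintegral_enorm _).trans_eq (lintegral_congr fun x => ?_)
  simp only [Pi.mul_apply, enorm_mul, mul_comm]

theorem setIntegral_preimage_eq_zero_of_forall_boundedContinuous [TopologicalSpace T]
    [TopologicalSpace.PseudoMetrizableSpace T] [BorelSpace T] (hΦ : Measurable Φ)
    (hφ : Integrable φ ν)
    (h : ∀ g : T →ᵇ ℂ, ∫ x, g (Φ x) * φ x ∂ν = 0) {t : Set T} (ht : MeasurableSet t) :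
    ∫ x in Φ ⁻¹' t, φ x ∂ν = 0 := by
  set ρ := (ν.withDensity (fun x => ‖φ x‖ₑ)).map Φ
  have : IsFiniteMeasure (ν.withDensity fun x => ‖φ x‖ₑ) := isFiniteMeasure_withDensity hφ.2.ne
  set u : T → ℂ := t.indicator 1
  have hu : Measurable u := measurable_const.indicator ht
  have hu_int : Integrable u ρ := (integrable_const 1).indicator ht
  have hu_le : ∀ y, ‖u y‖ ≤ 1 := fun y => by by_cases hy : y ∈ t <;> simp [u, hy]
  have hu_eq : ∫ x in Φ ⁻¹' t, φ x ∂ν = ∫ x, u (Φ x) * φ x ∂ν := by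
    rw [← integral_indicator (hΦ ht)]
    congr 1 with x
    by_cases hx : Φ x ∈ t <;> simp [u, hx]
  rw [hu_eq, ← enorm_eq_zero, ← nonpos_iff_eq_zero]
  refine le_of_forall_gt_imp_ge_of_dense fun ε hε => ?_
  -- The error of replacing `u` by `g` is controlled by their distance in `L¹(ρ)`.
  obtain ⟨g, hg, -⟩ := hu_int.exists_boundedContinuous_lintegral_sub_le hε.ne'
  have hg_eq : ∫ x, u (Φ x) * φ x ∂ν = ∫ x, (u - g) (Φ x) * φ x ∂ν := by
    simp only [Pi.sub_apply, sub_mul]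
    rw [integral_sub (integrable_comp_mul hΦ hφ hu hu_le)
      (integrable_comp_mul hΦ hφ g.continuous.measurable g.norm_coe_le_norm), h g, sub_zero]
  rw [hg_eq]
  exact (enorm_integral_comp_mul_le hΦ hφ (hu.sub g.continuous.measurable)).trans hg

end IntegralCompMul

theorem MeasurableSet.image_of_continuousOn_injOn_of_sigmaCompactSpace {X Y : Type*}
    [TopologicalSpace X] [SigmaCompactSpace X] [T2Space X] [SecondCountableTopology X]
    [MeasurableSpace X] [BorelSpace X] [TopologicalSpace Y] [T2Space Y]
    [MeasurableSpace Y] [OpensMeasurableSpace Y] {f : X → Y} {s : Set X} (hs : MeasurableSet s)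
    (hf : ContinuousOn f s) (hinj : InjOn f s) : MeasurableSet (f '' s) := by
  rw [← univ_inter s, ← iUnion_compactCovering, iUnion_inter, image_iUnion]
  refine .iUnion fun n => ?_
  have : CompactSpace (compactCovering X n) :=
    isCompact_iff_compactSpace.mp (isCompact_compactCovering X n)
  let := TopologicalSpace.metrizableSpaceMetric (compactCovering X n)
  rw [← Subtype.image_preimage_coe, ← image_comp]
  exact (measurable_subtype_coe hs).image_of_continuousOn_injOn
    (hf.comp continuous_subtype_val.continuousOn fun _ hx => hx)
    (hinj.comp Subtype.val_injective.injOn fun _ hx => hx)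

theorem ae_restrict_eq_zero_of_forall_setIntegral_preimage_eq_zero {X T : Type*}
    [TopologicalSpace X] [SigmaCompactSpace X] [T2Space X] [SecondCountableTopology X]
    [MeasurableSpace X] [BorelSpace X] [TopologicalSpace T] [T2Space T] [MeasurableSpace T]
    [OpensMeasurableSpace T] {μ : Measure X} {Ω : Set X} (hΩ : MeasurableSet Ω) {Φ : X → T}
    (hΦ : ContinuousOn Φ Ω) (hinj : InjOn Φ Ω) {φ : X → ℂ} (hφ : Integrable φ (μ.restrict Ω))
    (h : ∀ t, MeasurableSet t → ∫ x in Φ ⁻¹' t, φ x ∂μ.restrict Ω = 0) :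
    φ =ᵐ[μ.restrict Ω] 0 := by
  refine hφ.ae_eq_zero_of_forall_setIntegral_eq_zero fun s hs _ => ?_
  have hs' : MeasurableSet (Φ '' (s ∩ Ω)) :=
    (hs.inter hΩ).image_of_continuousOn_injOn_of_sigmaCompactSpace
      (hΦ.mono inter_subset_right) (hinj.mono inter_subset_right)
  rw [← h _ hs']
  refine setIntegral_congr_set ?_
  filter_upwards [ae_restrict_mem hΩ] with x hx
  simp only [eq_iff_iff]
  exact ⟨fun hxs => ⟨x, ⟨hxs, hx⟩, rfl⟩, fun ⟨y, ⟨hys, hy⟩, hxy⟩ => hinj hy hx hxy ▸ hys⟩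

theorem eq_zero_of_fourier_coefficients_eq_zero_general
    (G : Type*) [CommGroup G] [TopologicalSpace G] [IsTopologicalGroup G]
    [LocallyCompactSpace G] [SecondCountableTopology G]
    (H : Subgroup G) [Countable ↥H]
    [MeasurableSpace (PontryaginDual G)] [BorelSpace (PontryaginDual G)]
    (μ : Measure (PontryaginDual G))
    (Ω : Set (PontryaginDual G)) (hΩmeas : MeasurableSet Ω)
    (hΩ : ∀ γ : PontryaginDual G, ∃! ω : PontryaginDual G, ω ∈ Ω ∧ ω⁻¹ * γ ∈ annihilator H)
    (φ : PontryaginDual G → ℂ)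
    (hφ : Integrable φ (μ.restrict Ω))
    (hcoef : ∀ h : ↥H,
      ∫ γ, ((γ (h : G) : Circle) : ℂ)⁻¹ * φ γ ∂(μ.restrict Ω) = 0) :
    φ =ᵐ[μ.restrict Ω] 0 := by
  have : SecondCountableTopology (PontryaginDual G) :=
    (ContinuousMonoidHom.isInducing_toContinuousMap G Circle).secondCountableTopology
  let : MeasurableSpace Circle := borel Circle
  have : BorelSpace Circle := ⟨rfl⟩
  let Φ : PontryaginDual G → H → Circle := fun γ h => γ h
  have hΦ : Continuous Φ :=
    continuous_pi fun h => continuous_eval_const (F := ContinuousMonoidHom G Circle) (h : G)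
  have hinj : InjOn Φ Ω := fun γ hγ γ' hγ' hΦγ => by
    have hγγ' : γ⁻¹ * γ' ∈ annihilator H := fun h hh => by
      change (γ h)⁻¹ * γ' h = 1
      rw [show γ h = γ' h from congr_fun hΦγ ⟨h, hh⟩, inv_mul_cancel]
    exact (hΩ γ').unique ⟨hγ, hγγ'⟩ ⟨hγ', by simp [(annihilator H).one_mem]⟩
  have hchar : ∀ f ∈ Submonoid.closure (range (circleCoord H) ∪ star (range (circleCoord H))),
      ∫ γ, f (Φ γ) * φ γ ∂μ.restrict Ω = 0 := fun f hf => by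
    obtain ⟨h, hh⟩ := exists_apply_eq_of_mem_closure_circleCoord hf
    rw [← hcoef h⁻¹]
    congr 1 with γ
    rw [show f (Φ γ) = γ h from hh ((γ : G →* Circle).comp H.subtype)]
    simp
  have hcont := integral_comp_mul_eq_zero_of_dense hΦ.measurable hφ
    (ContinuousMap.dense_span_closure_union_star fun _ _ => circleCoord_separatesPoints H) hchar
  exact ae_restrict_eq_zero_of_forall_setIntegral_preimage_eq_zero hΩmeas hΦ.continuousOn hinj hφ
    fun t ht => setIntegral_preimage_eq_zero_of_forall_boundedContinuous hΦ.measurable hφ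
      (fun g => hcont g.toContinuousMap) ht

/-- If `φ ∈ L¹(Ω)` (with `Ω` a Borel section of `Ĝ ⧸ Δ`) satisfies
`∫_Ω γ(h)⁻¹ φ(γ) dμ(γ) = 0` for all `h ∈ H`, then `φ = 0` a.e. on `Ω`. -/
theorem eq_zero_of_fourier_coefficients_eq_zero
    (G : Type*) [CommGroup G] [TopologicalSpace G] [IsTopologicalGroup G]
    [LocallyCompactSpace G] [T2Space G] [SecondCountableTopology G]
    (H : Subgroup G) [Countable ↥H] (hHdisc : DiscreteTopology ↥H)
    (hHcocompact : CompactSpace (G ⧸ H))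
    [MeasurableSpace (PontryaginDual G)] [BorelSpace (PontryaginDual G)]
    (μ : Measure (PontryaginDual G)) [μ.IsHaarMeasure]
    (Ω : Set (PontryaginDual G)) (hΩmeas : MeasurableSet Ω)
    (hΩ : ∀ γ : PontryaginDual G, ∃! ω : PontryaginDual G, ω ∈ Ω ∧ ω⁻¹ * γ ∈ annihilator H)
    (φ : PontryaginDual G → ℂ)
    (hφ : Integrable φ (μ.restrict Ω))
    (hcoef : ∀ h : ↥H,
      ∫ γ, ((γ (h : G) : Circle) : ℂ)⁻¹ * φ γ ∂(μ.restrict Ω) = 0) :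
    φ =ᵐ[μ.restrict Ω] 0 :=
  eq_zero_of_fourier_coefficients_eq_zero_general G H μ Ω hΩmeas hΩ φ hφ hcoef
end

section
/- Let J be a range function, i.e., a map from Ω to closed subspaces of ℓ²(Δ). Then the set M_J = {Φ ∈ L²(Ω, ℓ²(Δ)) : Φ(ω) ∈ J(ω) for a.e. ω} is a closed subspace of L²(Ω, ℓ²(Δ)). -/
open MeasureTheory

set_option synthInstance.maxHeartbeats 1000000 in
set_option maxHeartbeats 1000000 in
/-- For a range function `J` (a map from `Ω` to closed subspaces of `ℓ²(Δ)`, not necessarily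
measurable), the set `M_J = {Φ ∈ L²(Ω, ℓ²(Δ)) : Φ(ω) ∈ J(ω) a.e.}` is closed in
`L²(Ω, ℓ²(Δ))`. -/
theorem MJ_isClosed
    (Ω : Type*) [MeasurableSpace Ω] (μ : Measure Ω) [IsFiniteMeasure μ]
    (Δ : Type*) [Countable Δ]
    (J : Ω → Submodule ℂ (lp (fun _ : Δ => ℂ) 2))
    (hJ : ∀ ω, IsClosed (J ω : Set (lp (fun _ : Δ => ℂ) 2))) :
    IsClosed {Φ : Lp (lp (fun _ : Δ => ℂ) 2) 2 μ |
      ∀ᵐ ω ∂μ, (Φ : Ω → lp (fun _ : Δ => ℂ) 2) ω ∈ J ω} := by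
  apply IsSeqClosed.isClosed
  intro f Φ hf hlim
  -- f n → Φ in Lp, so in measure, so some subsequence converges a.e.
  have hmeas : TendstoInMeasure μ (fun n => (f n : Ω → lp (fun _ : Δ => ℂ) 2)) Filter.atTop
      (Φ : Ω → lp (fun _ : Δ => ℂ) 2) := by
    exact tendstoInMeasure_of_tendsto_Lp hlim
  obtain ⟨ns, hns, hae⟩ := hmeas.exists_seq_tendsto_ae
  have hsub : ∀ᵐ ω ∂μ, ∀ n, (f (ns n) : Ω → lp (fun _ : Δ => ℂ) 2) ω ∈ J ω :=
    ae_all_iff.mpr fun n => hf (ns n)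
  filter_upwards [hae, hsub] with ω hω hω'
  exact (hJ ω).mem_of_tendsto hω (Filter.Eventually.of_forall hω')
end

section
/- Let J be a measurable range function with associated orthogonal projections P_ω : ℓ²(Δ) → J(ω), and let 𝒫 be the orthogonal projection of L²(Ω, ℓ²(Δ)) onto M_J. Then (𝒫Φ)(ω) = P_ω(Φ(ω)) for a.e. ω ∈ Ω and every Φ ∈ L²(Ω, ℓ²(Δ)). -/
/-!
Put `G = Φ - 𝒫Φ`. The field `Ψ ω = P ω (G ω)` lies in `M_J`, and pointwise
`⟪P ω x, P ω x⟫ = ⟪x, P ω x⟫`, so `‖Ψ‖² = ⟪G, Ψ⟫ = 0`. Hence `G ω ⊥ J ω` almost everywhere, and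
as `𝒫Φ ω ∈ J ω`, the decomposition `Φ ω = 𝒫Φ ω + G ω` forces `𝒫Φ ω = P ω (Φ ω)`.

`Ψ` is measurable because weak measurability of `ω ↦ P ω a` upgrades to strong measurability
(for countable `Δ` it is the pointwise limit of its finite coordinate sums), and then `ω ↦ P ω (G ω)` is the pointwise limit of
`ω ↦ P ω (s n ω)` for simple functions `s n → G`.
-/

open MeasureTheory Filter

def ContinuousLinearMap.IsOrthogonalProjectionOnto {𝕜 E : Type*} [RCLike 𝕜]
    [NormedAddCommGroup E] [InnerProductSpace 𝕜 E] (Q : E →L[𝕜] E) (K : Submodule 𝕜 E) : Prop :=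
  ∀ x, Q x ∈ K ∧ x - Q x ∈ Kᗮ

namespace ContinuousLinearMap.IsOrthogonalProjectionOnto

variable {𝕜 E : Type*} [RCLike 𝕜] [NormedAddCommGroup E] [InnerProductSpace 𝕜 E]
  {K : Submodule 𝕜 E} {Q : E →L[𝕜] E}

lemma apply_eq_self_of_mem (hQ : Q.IsOrthogonalProjectionOnto K) {u : E} (hu : u ∈ K) :
    Q u = u := by
  have hK : u - Q u ∈ K := K.sub_mem hu (hQ u).1
  exact (sub_eq_zero.1 (inner_self_eq_zero.1
    (Submodule.inner_right_of_mem_orthogonal hK (hQ u).2))).symm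

lemma inner_apply_apply (hQ : Q.IsOrthogonalProjectionOnto K) (x : E) :
    inner 𝕜 (Q x) (Q x) = inner 𝕜 x (Q x) := by
  have h : inner 𝕜 (x - Q x) (Q x) = 0 :=
    Submodule.inner_left_of_mem_orthogonal (hQ x).1 (hQ x).2
  rwa [inner_sub_left, sub_eq_zero, eq_comm] at h

lemma norm_apply_le (hQ : Q.IsOrthogonalProjectionOnto K) (x : E) : ‖Q x‖ ≤ ‖x‖ := by
  have h : inner 𝕜 (Q x) (x - Q x) = 0 :=
    Submodule.inner_right_of_mem_orthogonal (hQ x).1 (hQ x).2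
  have hpyth := norm_add_sq_eq_norm_sq_add_norm_sq_of_inner_eq_zero (Q x) (x - Q x) h
  rw [add_sub_cancel] at hpyth
  nlinarith [norm_nonneg (Q x), norm_nonneg x, sq_nonneg ‖x - Q x‖]

end ContinuousLinearMap.IsOrthogonalProjectionOnto

namespace MeasureTheory

variable {Ω : Type*} [MeasurableSpace Ω] {μ : Measure Ω}

lemma stronglyMeasurable_lp_of_forall_apply {ι : Type*} [Countable ι]
    {E : ι → Type*} [∀ i, NormedAddCommGroup (E i)] {p : ENNReal} [Fact (1 ≤ p)] (hp : p ≠ ⊤)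
    {f : Ω → lp E p} (hf : ∀ i, StronglyMeasurable fun ω => (f ω : ∀ i, E i) i) :
    StronglyMeasurable f := by
  classical
  refine stronglyMeasurable_of_tendsto atTop
    (f := fun s : Finset ι => fun ω => ∑ i ∈ s, lp.single p i ((f ω : ∀ i, E i) i))
    (fun s => Finset.stronglyMeasurable_fun_sum s fun i _ =>
      (lp.isometry_single i).continuous.comp_stronglyMeasurable (hf i)) ?_
  exact tendsto_pi_nhds.2 fun ω => lp.hasSum_single hp (f ω)

section CLMApply

variable {𝕜 E F : Type*} [RCLike 𝕜] [NormedAddCommGroup E] [NormedSpace 𝕜 E]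
  [NormedAddCommGroup F] [NormedSpace 𝕜 F] {T : Ω → E →L[𝕜] F}

lemma StronglyMeasurable.clm_apply_of_forall_apply (hT : ∀ a, StronglyMeasurable fun ω => T ω a)
    {f : Ω → E} (hf : StronglyMeasurable f) : StronglyMeasurable fun ω => T ω (f ω) := by
  have hsimple : ∀ s : SimpleFunc Ω E, StronglyMeasurable fun ω => T ω (s ω) := by
    intro s
    induction s using SimpleFunc.induction with
    | @const c S hS =>
      have h : (fun ω => T ω ((SimpleFunc.piecewise S hS (SimpleFunc.const Ω c)
          (SimpleFunc.const Ω 0)) ω)) = S.indicator fun ω => T ω c := by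
        ext1 ω
        by_cases hω : ω ∈ S <;> simp [hω]
      rw [h]
      exact (hT c).indicator hS
    | add _ hf hg =>
      simp only [SimpleFunc.coe_add, Pi.add_apply, map_add]
      exact hf.add hg
  exact stronglyMeasurable_of_tendsto atTop (fun n => hsimple (hf.approx n))
    (tendsto_pi_nhds.2 fun ω => ((T ω).continuous.tendsto _).comp (hf.tendsto_approx ω))

lemma AEStronglyMeasurable.clm_apply_of_forall_apply
    (hT : ∀ a, StronglyMeasurable fun ω => T ω a)
    {f : Ω → E} (hf : AEStronglyMeasurable f μ) :
    AEStronglyMeasurable (fun ω => T ω (f ω)) μ :=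
  ⟨_, hf.stronglyMeasurable_mk.clm_apply_of_forall_apply hT,
    hf.ae_eq_mk.mono fun ω hω => congrArg (T ω) hω⟩

end CLMApply

section L2

variable {𝕜 E : Type*} [RCLike 𝕜] [NormedAddCommGroup E] [InnerProductSpace 𝕜 E]
  {K : Ω → Submodule 𝕜 E} {P : Ω → E →L[𝕜] E}

lemma ae_apply_eq_zero_of_forall_inner_eq_zero
    (hP : ∀ ω, (P ω).IsOrthogonalProjectionOnto (K ω))
    (hPm : ∀ a, StronglyMeasurable fun ω => P ω a) {G : Lp E 2 μ}
    (hG : ∀ Ψ : Lp E 2 μ, (∀ᵐ ω ∂μ, (Ψ : Ω → E) ω ∈ K ω) → inner 𝕜 G Ψ = 0) :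
    ∀ᵐ ω ∂μ, P ω ((G : Ω → E) ω) = 0 := by
  have hmem : MemLp (fun ω => P ω ((G : Ω → E) ω)) 2 μ :=
    (Lp.memLp G).of_le ((Lp.aestronglyMeasurable G).clm_apply_of_forall_apply hPm)
      (ae_of_all _ fun ω => (hP ω).norm_apply_le _)
  set Ψ : Lp E 2 μ := hmem.toLp _
  have hΨ : (Ψ : Ω → E) =ᵐ[μ] fun ω => P ω ((G : Ω → E) ω) := hmem.coeFn_toLp
  have hΨK : ∀ᵐ ω ∂μ, (Ψ : Ω → E) ω ∈ K ω := hΨ.mono fun ω hω => hω ▸ (hP ω _).1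
  have hΨG : inner 𝕜 Ψ Ψ = inner 𝕜 G Ψ := by
    simp only [L2.inner_def]
    refine integral_congr_ae ?_
    filter_upwards [hΨ] with ω hω
    rw [hω]
    exact (hP ω).inner_apply_apply _
  have hΨ0 : Ψ = 0 := inner_self_eq_zero.1 (hΨG.trans (hG Ψ hΨK))
  filter_upwards [hΨ, hΨ0 ▸ Lp.coeFn_zero E 2 μ] with ω hω hω0
  rw [← hω, hω0, Pi.zero_apply]

end L2

end MeasureTheory

theorem orthogonal_projection_onto_MJ_is_fiberwise_general
    (Ω : Type*) [MeasurableSpace Ω] (μ : Measure Ω)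
    (Δ : Type*) [Countable Δ]
    (J : Ω → Submodule ℂ (lp (fun _ : Δ => ℂ) 2))
    -- the fiberwise orthogonal projections onto `J ω`
    (P : Ω → (lp (fun _ : Δ => ℂ) 2) →L[ℂ] (lp (fun _ : Δ => ℂ) 2))
    (hP : ∀ ω x, P ω x ∈ J ω ∧ x - P ω x ∈ (J ω)ᗮ)
    -- measurability of the range function
    (hPmeas : ∀ a b : lp (fun _ : Δ => ℂ) 2,
      Measurable (fun ω => (inner ℂ (P ω a) b : ℂ)))
    -- `Pr` is the orthogonal projection onto `M_J`
    (Pr : Lp (lp (fun _ : Δ => ℂ) 2) 2 μ →L[ℂ] Lp (lp (fun _ : Δ => ℂ) 2) 2 μ)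
    (hPrmem : ∀ Φ, ∀ᵐ ω ∂μ,
      (Pr Φ : Ω → lp (fun _ : Δ => ℂ) 2) ω ∈ J ω)
    (hProrth : ∀ Φ Ψ : Lp (lp (fun _ : Δ => ℂ) 2) 2 μ,
      (∀ᵐ ω ∂μ, (Ψ : Ω → lp (fun _ : Δ => ℂ) 2) ω ∈ J ω) →
        (inner ℂ (Φ - Pr Φ) Ψ : ℂ) = 0) :
    ∀ Φ : Lp (lp (fun _ : Δ => ℂ) 2) 2 μ, ∀ᵐ ω ∂μ,
      (Pr Φ : Ω → lp (fun _ : Δ => ℂ) 2) ω = P ω ((Φ : Ω → lp (fun _ : Δ => ℂ) 2) ω) := by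
  classical
  have hPm (a : lp (fun _ : Δ => ℂ) 2) : StronglyMeasurable fun ω => P ω a := by
    refine stronglyMeasurable_lp_of_forall_apply ENNReal.ofNat_ne_top fun δ => ?_
    have hcoord (ω : Ω) :
        (P ω a : Δ → ℂ) δ = starRingEnd ℂ (inner ℂ (P ω a) (lp.single 2 δ 1)) := by
      simp [lp.inner_single_right]
    simp_rw [hcoord]
    exact (Complex.continuous_conj.measurable.comp (hPmeas a _)).stronglyMeasurable
  have hproj (ω : Ω) : (P ω).IsOrthogonalProjectionOnto (J ω) := hP ω
  intro Φ
  filter_upwards [ae_apply_eq_zero_of_forall_inner_eq_zero hproj hPm (hProrth Φ),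
    Lp.coeFn_sub Φ (Pr Φ), hPrmem Φ] with ω hzero hsub hmem
  rw [hsub, Pi.sub_apply, map_sub, (hproj ω).apply_eq_self_of_mem hmem, sub_eq_zero] at hzero
  exact hzero.symm

/-- Helson's lemma: let `J` be a measurable range function on `Ω` with values closed subspaces
of `ℓ²(Δ)`, with associated orthogonal projections `P ω`, and let `Pr` be the orthogonal
projection of `L²(Ω, ℓ²(Δ))` onto `M_J`. Then `(PrΦ)(ω) = P ω (Φ(ω))` for a.e. `ω` and
every `Φ`. -/
theorem orthogonal_projection_onto_MJ_is_fiberwise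
    (Ω : Type*) [MeasurableSpace Ω] (μ : Measure Ω) [IsFiniteMeasure μ]
    (Δ : Type*) [Countable Δ]
    (J : Ω → Submodule ℂ (lp (fun _ : Δ => ℂ) 2))
    (hJ : ∀ ω, IsClosed (J ω : Set (lp (fun _ : Δ => ℂ) 2)))
    -- the fiberwise orthogonal projections onto `J ω`
    (P : Ω → (lp (fun _ : Δ => ℂ) 2) →L[ℂ] (lp (fun _ : Δ => ℂ) 2))
    (hP : ∀ ω x, P ω x ∈ J ω ∧ x - P ω x ∈ (J ω)ᗮ)
    -- measurability of the range function
    (hPmeas : ∀ a b : lp (fun _ : Δ => ℂ) 2,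
      Measurable (fun ω => (inner ℂ (P ω a) b : ℂ)))
    -- `Pr` is the orthogonal projection onto `M_J`
    (Pr : Lp (lp (fun _ : Δ => ℂ) 2) 2 μ →L[ℂ] Lp (lp (fun _ : Δ => ℂ) 2) 2 μ)
    (hPrmem : ∀ Φ, ∀ᵐ ω ∂μ,
      (Pr Φ : Ω → lp (fun _ : Δ => ℂ) 2) ω ∈ J ω)
    (hProrth : ∀ Φ Ψ : Lp (lp (fun _ : Δ => ℂ) 2) 2 μ,
      (∀ᵐ ω ∂μ, (Ψ : Ω → lp (fun _ : Δ => ℂ) 2) ω ∈ J ω) →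
        (inner ℂ (Φ - Pr Φ) Ψ : ℂ) = 0) :
    ∀ Φ : Lp (lp (fun _ : Δ => ℂ) 2) 2 μ, ∀ᵐ ω ∂μ,
      (Pr Φ : Ω → lp (fun _ : Δ => ℂ) 2) ω = P ω ((Φ : Ω → lp (fun _ : Δ => ℂ) 2) ω) :=
  orthogonal_projection_onto_MJ_is_fiberwise_general Ω μ Δ J P hP hPmeas Pr hPrmem hProrth
end

section
/- If J and K are measurable range functions with M_J = M_K, then J(ω) = K(ω) for almost every ω ∈ Ω. -/
open MeasureTheory

/-!
For a fixed vector `a`, the section `ω ↦ P_J(ω) a` is bounded by `‖a‖` and measurable, so it lies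
in `M_J = M_K`; hence `P_J(ω) a ∈ K(ω)` for a.e. `ω`, and symmetrically `P_K(ω) a ∈ J(ω)`. Then
`P_J(ω) a - P_K(ω) a` lies in `J(ω) ∩ K(ω)` and is orthogonal to itself, so the two projections
agree at `a`. Doing this for the countably many vectors of the standard Hilbert basis of `ℓ²(Δ)`
gives `P_J(ω) = P_K(ω)` for a.e. `ω`, and a projection determines its range.
-/

section OrthogonalProjection

variable {𝕜 E : Type*} [RCLike 𝕜] [NormedAddCommGroup E] [InnerProductSpace 𝕜 E]

def IsOrthogonalProjection (U : Submodule 𝕜 E) (P : E → E) : Prop :=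
  ∀ x, P x ∈ U ∧ x - P x ∈ Uᗮ

namespace IsOrthogonalProjection

variable {U V : Submodule 𝕜 E} {P Q : E → E}

theorem norm_apply_le (hP : IsOrthogonalProjection U P) (x : E) : ‖P x‖ ≤ ‖x‖ := by
  have hpyth : ‖x‖ * ‖x‖ = ‖P x‖ * ‖P x‖ + ‖x - P x‖ * ‖x - P x‖ := by
    simpa only [add_sub_cancel] using norm_add_sq_eq_norm_sq_add_norm_sq_of_inner_eq_zero (P x)
      (x - P x) (Submodule.inner_right_of_mem_orthogonal (hP x).1 (hP x).2)
  rw [mul_self_le_mul_self_iff (norm_nonneg _) (norm_nonneg _), hpyth]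
  exact le_add_of_nonneg_right (mul_self_nonneg _)

theorem apply_eq_apply_of_mem (hP : IsOrthogonalProjection U P) (hQ : IsOrthogonalProjection V Q)
    {x : E} (hPV : P x ∈ V) (hQU : Q x ∈ U) : P x = Q x := by
  have hU : P x - Q x ∈ U := sub_mem (hP x).1 hQU
  have hV : P x - Q x ∈ V := sub_mem hPV (hQ x).1
  rw [← sub_eq_zero, ← inner_self_eq_zero (𝕜 := 𝕜)]
  calc inner 𝕜 (P x - Q x) (P x - Q x)
      = inner 𝕜 (P x - Q x) (x - Q x) - inner 𝕜 (P x - Q x) (x - P x) := by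
        rw [← inner_sub_right, sub_sub_sub_cancel_left]
    _ = 0 := by
        rw [Submodule.inner_right_of_mem_orthogonal hV (hQ x).2,
          Submodule.inner_right_of_mem_orthogonal hU (hP x).2, sub_zero]

theorem apply_eq_self (hP : IsOrthogonalProjection U P) {x : E} (hx : x ∈ U) : P x = x :=
  (sub_eq_zero.1 <| Submodule.disjoint_def.1 U.orthogonal_disjoint _
    (sub_mem hx (hP x).1) (hP x).2).symm

theorem le_of_apply_eq (hP : IsOrthogonalProjection U P) (hQ : IsOrthogonalProjection V Q)
    (h : ∀ x, P x = Q x) : U ≤ V := fun x hx => by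
  rw [← hP.apply_eq_self hx, h]
  exact (hQ x).1

theorem eq_of_apply_eq (hP : IsOrthogonalProjection U P) (hQ : IsOrthogonalProjection V Q)
    (h : ∀ x, P x = Q x) : U = V :=
  le_antisymm (hP.le_of_apply_eq hQ h) (hQ.le_of_apply_eq hP fun x => (h x).symm)

end IsOrthogonalProjection

end OrthogonalProjection

namespace HilbertBasis

variable {ι 𝕜 E Ω : Type*} [Countable ι] [RCLike 𝕜] [NormedAddCommGroup E]
  [InnerProductSpace 𝕜 E] [MeasurableSpace Ω]

theorem stronglyMeasurable_of_measurable_inner (b : HilbertBasis ι 𝕜 E) {f : Ω → E}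
    (hf : ∀ x, Measurable fun ω => inner 𝕜 (f ω) x) : StronglyMeasurable f := by
  have hcoord : ∀ i, Measurable fun ω => b.repr (f ω) i := fun i => by
    simpa only [b.repr_apply_apply, Function.comp_def, inner_conj_symm] using
      RCLike.continuous_conj.measurable.comp (hf (b i))
  refine stronglyMeasurable_of_tendsto Filter.atTop (fun s => ?_)
    (tendsto_pi_nhds.2 fun ω => b.hasSum_repr (f ω))
  exact Finset.stronglyMeasurable_fun_sum _ fun i _ => (hcoord i).stronglyMeasurable.smul_const _

theorem ae_eq_of_forall_ae_apply_eq (b : HilbertBasis ι 𝕜 E) {F : Type*} [TopologicalSpace F]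
    [AddCommMonoid F] [Module 𝕜 F] [T2Space F] {μ : Measure Ω} {f g : Ω → E →L[𝕜] F}
    (h : ∀ i, ∀ᵐ ω ∂μ, f ω (b i) = g ω (b i)) : ∀ᵐ ω ∂μ, f ω = g ω := by
  filter_upwards [ae_all_iff.2 h] with ω hω
  refine ContinuousLinearMap.ext_on (Submodule.dense_iff_topologicalClosure_eq_top.2 b.dense_span) ?_
  rintro _ ⟨i, rfl⟩
  exact hω i

end HilbertBasis

theorem MeasureTheory.MemLp.ae_mem_of_subset {Ω E : Type*} [MeasurableSpace Ω]
    [NormedAddCommGroup E] {p : ENNReal} {μ : Measure Ω} {J K : Ω → Set E}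
    (hJK : {Φ : Lp E p μ | ∀ᵐ ω ∂μ, Φ ω ∈ J ω} ⊆ {Φ : Lp E p μ | ∀ᵐ ω ∂μ, Φ ω ∈ K ω})
    {f : Ω → E} (hf : MemLp f p μ) (hfJ : ∀ᵐ ω ∂μ, f ω ∈ J ω) : ∀ᵐ ω ∂μ, f ω ∈ K ω := by
  have hJ : ∀ᵐ ω ∂μ, hf.toLp f ω ∈ J ω := by
    filter_upwards [hf.coeFn_toLp, hfJ] with ω hω hωJ
    rwa [hω]
  filter_upwards [hJK hJ, hf.coeFn_toLp] with ω hωK hω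
  rwa [hω] at hωK

theorem IsOrthogonalProjection.ae_apply_mem_of_subset {𝕜 E Ω : Type*} [RCLike 𝕜]
    [NormedAddCommGroup E] [InnerProductSpace 𝕜 E] [MeasurableSpace Ω] {μ : Measure Ω}
    [IsFiniteMeasure μ] {J K : Ω → Submodule 𝕜 E} {P : Ω → E → E}
    (hP : ∀ ω, IsOrthogonalProjection (J ω) (P ω))
    (hPmeas : ∀ a, AEStronglyMeasurable (fun ω => P ω a) μ)
    (hJK : {Φ : Lp E 2 μ | ∀ᵐ ω ∂μ, Φ ω ∈ J ω} ⊆ {Φ : Lp E 2 μ | ∀ᵐ ω ∂μ, Φ ω ∈ K ω})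
    (a : E) : ∀ᵐ ω ∂μ, P ω a ∈ K ω :=
  (MemLp.of_bound (hPmeas a) ‖a‖ (ae_of_all _ fun ω => (hP ω).norm_apply_le a)).ae_mem_of_subset
    hJK (ae_of_all _ fun ω => (hP ω a).1)

theorem range_function_eq_ae_of_MJ_eq_MK_general
    (Ω : Type*) [MeasurableSpace Ω] (μ : Measure Ω) [IsFiniteMeasure μ]
    (Δ : Type*) [Countable Δ]
    (J K : Ω → Submodule ℂ (lp (fun _ : Δ => ℂ) 2))
    (PJ PK : Ω → (lp (fun _ : Δ => ℂ) 2) →L[ℂ] (lp (fun _ : Δ => ℂ) 2))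
    (hPJ : ∀ ω x, PJ ω x ∈ J ω ∧ x - PJ ω x ∈ (J ω)ᗮ)
    (hPK : ∀ ω x, PK ω x ∈ K ω ∧ x - PK ω x ∈ (K ω)ᗮ)
    (hPJmeas : ∀ a b : lp (fun _ : Δ => ℂ) 2,
      Measurable (fun ω => (inner ℂ (PJ ω a) b : ℂ)))
    (hPKmeas : ∀ a b : lp (fun _ : Δ => ℂ) 2,
      Measurable (fun ω => (inner ℂ (PK ω a) b : ℂ)))
    (hMJK : {Φ : Lp (lp (fun _ : Δ => ℂ) 2) 2 μ |
        ∀ᵐ ω ∂μ, (Φ : Ω → lp (fun _ : Δ => ℂ) 2) ω ∈ J ω} =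
      {Φ : Lp (lp (fun _ : Δ => ℂ) 2) 2 μ |
        ∀ᵐ ω ∂μ, (Φ : Ω → lp (fun _ : Δ => ℂ) 2) ω ∈ K ω}) :
    ∀ᵐ ω ∂μ, J ω = K ω := by
  let b : HilbertBasis Δ ℂ (lp (fun _ : Δ => ℂ) 2) := default
  have hJK : ∀ a, ∀ᵐ ω ∂μ, PJ ω a ∈ K ω :=
    IsOrthogonalProjection.ae_apply_mem_of_subset (P := fun ω => PJ ω) hPJ
      (fun a => (b.stronglyMeasurable_of_measurable_inner (hPJmeas a)).aestronglyMeasurable)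
      hMJK.subset
  have hKJ : ∀ a, ∀ᵐ ω ∂μ, PK ω a ∈ J ω :=
    IsOrthogonalProjection.ae_apply_mem_of_subset (P := fun ω => PK ω) hPK
      (fun a => (b.stronglyMeasurable_of_measurable_inner (hPKmeas a)).aestronglyMeasurable)
      hMJK.symm.subset
  have hPJK : ∀ᵐ ω ∂μ, PJ ω = PK ω := b.ae_eq_of_forall_ae_apply_eq fun i => by
    filter_upwards [hJK (b i), hKJ (b i)] with ω hJ hK
    exact IsOrthogonalProjection.apply_eq_apply_of_mem (hPJ ω) (hPK ω) hJ hK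
  filter_upwards [hPJK] with ω hω
  exact IsOrthogonalProjection.eq_of_apply_eq (hPJ ω) (hPK ω) (DFunLike.congr_fun hω)

/-- If `J` and `K` are measurable range functions (with fiberwise orthogonal projections
`PJ`, `PK` that are weakly measurable) such that `M_J = M_K`, then `J(ω) = K(ω)` for
almost every `ω`. -/
theorem range_function_eq_ae_of_MJ_eq_MK
    (Ω : Type*) [MeasurableSpace Ω] (μ : Measure Ω) [IsFiniteMeasure μ]
    (Δ : Type*) [Countable Δ]
    (J K : Ω → Submodule ℂ (lp (fun _ : Δ => ℂ) 2))
    (hJ : ∀ ω, IsClosed (J ω : Set (lp (fun _ : Δ => ℂ) 2)))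
    (hK : ∀ ω, IsClosed (K ω : Set (lp (fun _ : Δ => ℂ) 2)))
    (PJ PK : Ω → (lp (fun _ : Δ => ℂ) 2) →L[ℂ] (lp (fun _ : Δ => ℂ) 2))
    (hPJ : ∀ ω x, PJ ω x ∈ J ω ∧ x - PJ ω x ∈ (J ω)ᗮ)
    (hPK : ∀ ω x, PK ω x ∈ K ω ∧ x - PK ω x ∈ (K ω)ᗮ)
    (hPJmeas : ∀ a b : lp (fun _ : Δ => ℂ) 2,
      Measurable (fun ω => (inner ℂ (PJ ω a) b : ℂ)))
    (hPKmeas : ∀ a b : lp (fun _ : Δ => ℂ) 2,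
      Measurable (fun ω => (inner ℂ (PK ω a) b : ℂ)))
    (hMJK : {Φ : Lp (lp (fun _ : Δ => ℂ) 2) 2 μ |
        ∀ᵐ ω ∂μ, (Φ : Ω → lp (fun _ : Δ => ℂ) 2) ω ∈ J ω} =
      {Φ : Lp (lp (fun _ : Δ => ℂ) 2) 2 μ |
        ∀ᵐ ω ∂μ, (Φ : Ω → lp (fun _ : Δ => ℂ) 2) ω ∈ K ω}) :
    ∀ᵐ ω ∂μ, J ω = K ω :=
  range_function_eq_ae_of_MJ_eq_MK_general Ω μ Δ J K PJ PK hPJ hPK hPJmeas hPKmeas hMJK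
end
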